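/- The NDMES rule satisfies S-STAY: cumulative shares are non-decreasing, and when a contributional player i arrives (v(Sᵢ) > v(Sᵢ∖{i})), every earlier player j with v(Sᵢ) > v(Sᵢ∖{j}) receives a strictly positive additional amount at step i. -/

import Mathlib

variable {α : Type*} [DecidableEq α]

/-- The set of players arrived up to and including step `t`, under arrival order `π`. -/
def prefixSet {n : ℕ} (π : Fin n → α) (t : Fin n) : Finset α :=
  (Finset.Iic t).image π

/-- Player `j` is a dummy player of the sub-game restricted to `S`. -/
def IsDummy (v : Finset α → ℝ) (S : Finset α) (j : α) : Prop :=
  ∀ T ⊆ S, v (insert j T) = v T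

open Classical in
/-- The non-dummy players of the sub-game restricted to `S`. -/
noncomputable def nonDummies (v : Finset α → ℝ) (S : Finset α) : Finset α :=
  S.filter (fun j => ¬ IsDummy v S j)

/-- Amount NDMES gives player `p` at step `t`: the marginal contribution of the new
arrival `π t` is split equally among the non-dummy players of the current prefix. -/
noncomputable def ndmesStep {n : ℕ} (v : Finset α → ℝ) (π : Fin n → α) (t : Fin n) (p : α) : ℝ :=
  if p ∈ nonDummies v (prefixSet π t) then
    (v (prefixSet π t) - v ((prefixSet π t).erase (π t))) /
      ((nonDummies v (prefixSet π t)).card : ℝ)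
  else 0

/-- Cumulative NDMES share of player `p` after step `t`. -/
noncomputable def ndmesCum {n : ℕ} (v : Finset α → ℝ) (π : Fin n → α) (p : α) (t : Fin n) : ℝ :=
  ∑ s ∈ Finset.Iic t, ndmesStep v π s p

section

variable {n : ℕ} {v : Finset α → ℝ} {π : Fin n → α}

lemma mem_prefixSet_of_le {s t : Fin n} (hst : s ≤ t) : π s ∈ prefixSet π t :=
  Finset.mem_image_of_mem π (Finset.mem_Iic.2 hst)

open Classical in
lemma mem_nonDummies_of_erase_lt {S : Finset α} {j : α} (hj : j ∈ S)
    (hlt : v (S.erase j) < v S) : j ∈ nonDummies v S := by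
  rw [nonDummies, Finset.mem_filter]
  refine ⟨hj, fun hdummy => hlt.ne ?_⟩
  simpa only [Finset.insert_erase hj] using (hdummy _ (Finset.erase_subset j S)).symm

lemma ndmesStep_nonneg (hmono : Monotone v) (t : Fin n) (p : α) : 0 ≤ ndmesStep v π t p := by
  unfold ndmesStep
  split_ifs
  · exact div_nonneg (sub_nonneg.2 (hmono (Finset.erase_subset _ _))) (Nat.cast_nonneg _)
  · exact le_rfl

lemma ndmesStep_pos {t : Fin n} {p : α} (hp : p ∈ nonDummies v (prefixSet π t))
    (hcontrib : v ((prefixSet π t).erase (π t)) < v (prefixSet π t)) :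
    0 < ndmesStep v π t p := by
  rw [ndmesStep, if_pos hp]
  exact div_pos (sub_pos.2 hcontrib) (Nat.cast_pos.2 (Finset.card_pos.2 ⟨p, hp⟩))

lemma ndmesCum_mono (hmono : Monotone v) (p : α) : Monotone (ndmesCum v π p) := fun _ _ hst =>
  Finset.sum_le_sum_of_subset_of_nonneg (Finset.Iic_subset_Iic.2 hst)
    fun i _ _ => ndmesStep_nonneg hmono i p

lemma ndmesCum_add_ndmesStep_le (hmono : Monotone v) (p : α) {s t : Fin n} (hst : s < t) :
    ndmesCum v π p s + ndmesStep v π t p ≤ ndmesCum v π p t := by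
  have ht : t ∉ Finset.Iic s := fun h => (Finset.mem_Iic.1 h).not_gt hst
  have hsub : insert t (Finset.Iic s) ⊆ Finset.Iic t :=
    Finset.insert_subset (Finset.mem_Iic.2 le_rfl) (Finset.Iic_subset_Iic.2 hst.le)
  calc ndmesCum v π p s + ndmesStep v π t p
      = ∑ i ∈ insert t (Finset.Iic s), ndmesStep v π i p := by
        rw [Finset.sum_insert ht, ndmesCum, add_comm]
    _ ≤ ndmesCum v π p t :=
        Finset.sum_le_sum_of_subset_of_nonneg hsub fun i _ _ => ndmesStep_nonneg hmono i p

end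

theorem ndmes_sstay_general {n : ℕ} (v : Finset α → ℝ) (π : Fin n → α)
    (hmono : ∀ S T : Finset α, S ⊆ T → v S ≤ v T) :
    (∀ (p : α) (s t : Fin n), s ≤ t → ndmesCum v π p s ≤ ndmesCum v π p t) ∧
    (∀ s t : Fin n, s < t →
      v (prefixSet π t) > v ((prefixSet π t).erase (π t)) →
      v (prefixSet π t) > v ((prefixSet π t).erase (π s)) →
      ndmesCum v π (π s) t > ndmesCum v π (π s) s) := by
  refine ⟨fun p s t hst => ndmesCum_mono hmono p hst, fun s t hst hcontrib hessential => ?_⟩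
  have hnonDummy : π s ∈ nonDummies v (prefixSet π t) :=
    mem_nonDummies_of_erase_lt (mem_prefixSet_of_le hst.le) hessential
  have hstep : 0 < ndmesStep v π t (π s) := ndmesStep_pos hnonDummy hcontrib
  have hgain := ndmesCum_add_ndmesStep_le (π := π) hmono (π s) hst
  linarith

/-- The NDMES rule satisfies S-STAY: cumulative shares are non-decreasing, and when a
contributional player `π t` arrives, every earlier player `π s` with
`v (prefixSet π t) > v (prefixSet π t \ {π s})` receives a strictly positive additional
amount, i.e. her cumulative share at step `t` strictly exceeds her cumulative
share at her own arrival step `s`. -/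
theorem ndmes_sstay {n : ℕ} (v : Finset α → ℝ) (π : Fin n → α)
    (hinj : Function.Injective π)
    (hnorm : v ∅ = 0)
    (hmono : ∀ S T : Finset α, S ⊆ T → v S ≤ v T) :
    (∀ (p : α) (s t : Fin n), s ≤ t → ndmesCum v π p s ≤ ndmesCum v π p t) ∧
    (∀ s t : Fin n, s < t →
      v (prefixSet π t) > v ((prefixSet π t).erase (π t)) →
      v (prefixSet π t) > v ((prefixSet π t).erase (π s)) →
      ndmesCum v π (π s) t > ndmesCum v π (π s) s) :=
  ndmes_sstay_general v π hmono
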